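/- arXiv:2102.02990 — 3 statements merged into one kernel-verified Lean document; each statement's English description precedes it below -/
import Mathlib

section
/- If a stacked star expression E over A is normed, then there exists a star expression f with f↓ such that E →bo* f, i.e., E reaches f by a (possibly empty) sequence of body transitions in L̂1(StExp^(*)(A)). -/
universe u v w

/-- Star expressions over a set `A` of actions. -/
inductive StExp (A : Type u) : Type u
  | zero : StExp A
  | one : StExp A
  | act : A → StExp A
  | add : StExp A → StExp A → StExp A
  | mul : StExp A → StExp A → StExp A
  | star : StExp A → StExp A

namespace StExp

variable {A : Type u}

/-- Immediate termination in Milner's TSS `T(A)`. -/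
inductive Term : StExp A → Prop
  | one : Term StExp.one
  | addL {e₁ e₂ : StExp A} : Term e₁ → Term (StExp.add e₁ e₂)
  | addR {e₁ e₂ : StExp A} : Term e₂ → Term (StExp.add e₁ e₂)
  | mul {e₁ e₂ : StExp A} : Term e₁ → Term e₂ → Term (StExp.mul e₁ e₂)
  | star {e : StExp A} : Term (StExp.star e)

/-- Transitions in Milner's TSS `T(A)`. -/
inductive Step : StExp A → A → StExp A → Prop
  | act {a : A} : Step (StExp.act a) a StExp.one
  | addL {e₁ e₂ e' : StExp A} {a : A} : Step e₁ a e' → Step (StExp.add e₁ e₂) a e'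
  | addR {e₁ e₂ e' : StExp A} {a : A} : Step e₂ a e' → Step (StExp.add e₁ e₂) a e'
  | mulL {e₁ e₂ e₁' : StExp A} {a : A} :
      Step e₁ a e₁' → Step (StExp.mul e₁ e₂) a (StExp.mul e₁' e₂)
  | mulR {e₁ e₂ e₂' : StExp A} {a : A} :
      Term e₁ → Step e₂ a e₂' → Step (StExp.mul e₁ e₂) a e₂'
  | star {e e' : StExp A} {a : A} :
      Step e a e' → Step (StExp.star e) a (StExp.mul e' (StExp.star e))

/-- (Syntactic) star height. -/
def height : StExp A → ℕ
  | .zero => 0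
  | .one => 0
  | .act _ => 0
  | .add e₁ e₂ => max e₁.height e₂.height
  | .mul e₁ e₂ => max e₁.height e₂.height
  | .star e => e.height + 1

end StExp

/-- Stacked star expressions: `E ::= e | E·e | E * e*`. -/
inductive SExp (A : Type u) : Type u
  | up : StExp A → SExp A
  | pr : SExp A → StExp A → SExp A
  | st : SExp A → StExp A → SExp A

namespace SExp

variable {A : Type u}

/-- Projection to star expressions, interpreting `*` as `·`. -/
def proj : SExp A → StExp A
  | .up e => e
  | .pr E e => StExp.mul E.proj e
  | .st E e => StExp.mul E.proj (StExp.star e)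

/-- `E` is a star expression (contains no stacked product `*`). -/
def IsStExp : SExp A → Prop
  | .up _ => True
  | .pr E _ => IsStExp E
  | .st _ _ => False

/-- Star expressions that are not products (canonical arguments of `up`). -/
def UpOk : StExp A → Prop
  | .mul _ _ => False
  | _ => True

/-- Canonical stacked star expressions: products of star expressions are
represented by `pr` rather than by `up` applied to `StExp.mul`. -/
def Canonical : SExp A → Prop
  | .up e => UpOk e
  | .pr E _ => Canonical E
  | .st E _ => Canonical E

/-- Canonical embedding of star expressions into stacked star expressions. -/
def flatUp : StExp A → SExp A
  | .mul e₁ e₂ => SExp.pr (flatUp e₁) e₂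
  | e => SExp.up e

/-- Immediate termination for stacked star expressions (TSS `T̲^(*)(A)`). -/
inductive STerm : SExp A → Prop
  | up {e : StExp A} : StExp.Term e → STerm (SExp.up e)
  | pr {E : SExp A} {e : StExp A} : STerm E → StExp.Term e → STerm (SExp.pr E e)

/-- Transitions of the TSS `T̲^(*)(A)`; labels in `Option A`, where `none`
is the empty-step label `1`. -/
inductive SStep : SExp A → Option A → SExp A → Prop
  | act {a : A} : SStep (SExp.up (StExp.act a)) (some a) (SExp.up StExp.one)
  | addL {e₁ e₂ : StExp A} {a : A} {E' : SExp A} :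
      SStep (SExp.up e₁) (some a) E' → SStep (SExp.up (StExp.add e₁ e₂)) (some a) E'
  | addR {e₁ e₂ : StExp A} {a : A} {E' : SExp A} :
      SStep (SExp.up e₂) (some a) E' → SStep (SExp.up (StExp.add e₁ e₂)) (some a) E'
  | upMulL {e₁ e₂ : StExp A} {l : Option A} {E₁' : SExp A} :
      SStep (SExp.up e₁) l E₁' → SStep (SExp.up (StExp.mul e₁ e₂)) l (SExp.pr E₁' e₂)
  | upMulR {e₁ e₂ : StExp A} {a : A} {E₂' : SExp A} :
      StExp.Term e₁ → SStep (SExp.up e₂) (some a) E₂' →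
      SStep (SExp.up (StExp.mul e₁ e₂)) (some a) E₂'
  | upStar {e : StExp A} {a : A} {E' : SExp A} :
      SStep (SExp.up e) (some a) E' →
      SStep (SExp.up (StExp.star e)) (some a) (SExp.st E' e)
  | prL {E₁ E₁' : SExp A} {e₂ : StExp A} {l : Option A} :
      SStep E₁ l E₁' → SStep (SExp.pr E₁ e₂) l (SExp.pr E₁' e₂)
  | prR {E₁ E₂' : SExp A} {e₂ : StExp A} {a : A} :
      STerm E₁ → SStep (SExp.up e₂) (some a) E₂' → SStep (SExp.pr E₁ e₂) (some a) E₂'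
  | stL {E₁ E₁' : SExp A} {e₂ : StExp A} {l : Option A} :
      SStep E₁ l E₁' → SStep (SExp.st E₁ e₂) l (SExp.st E₁' e₂)
  | stOne {E₁ : SExp A} {e₂ : StExp A} :
      STerm E₁ → SStep (SExp.st E₁ e₂) none (SExp.up (StExp.star e₂))

/-- `1`-transition. -/
def OneStep (E F : SExp A) : Prop := SStep E none F

/-- Transition with an arbitrary label in `A ∪ {1}`. -/
def AStep (E F : SExp A) : Prop := ∃ l, SStep E l F

/-- Induced (proper) transition `E ⇒a E'`: a sequence of `1`-transitions
followed by an `a`-transition. -/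
def IStep (E : SExp A) (a : A) (E' : SExp A) : Prop :=
  ∃ F, Relation.ReflTransGen OneStep E F ∧ SStep F (some a) E'

/-- Induced termination `E ↓(1)`: a sequence of `1`-transitions ending in a
terminating expression. -/
def ITerm (E : SExp A) : Prop :=
  ∃ F, Relation.ReflTransGen OneStep E F ∧ STerm F

/-- `E` is normed: a path to an expression with immediate termination. -/
def Normed (E : SExp A) : Prop :=
  ∃ F, Relation.ReflTransGen AStep E F ∧ STerm F

/-- `E` is normed⁺: a nonempty sequence of induced transitions to an
expression with induced termination. -/
def NormedP (E : SExp A) : Prop :=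
  ∃ F, Relation.TransGen (fun X Y => ∃ a : A, IStep X a Y) E F ∧ ITerm F

/-- Induced termination as derived in the extension `T̲ind^(*)(A)`. -/
inductive IndTerm : SExp A → Prop
  | base {E : SExp A} : STerm E → IndTerm E
  | step {E F : SExp A} : SStep E none F → IndTerm F → IndTerm E

/-- Induced transitions as derived in the extension `T̲ind^(*)(A)`. -/
inductive IndStep : SExp A → A → SExp A → Prop
  | base {E E' : SExp A} {a : A} : SStep E (some a) E' → IndStep E a E'
  | step {E F E' : SExp A} {a : A} : SStep E none F → IndStep F a E' → IndStep E a E'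

/-- Marked transitions of the TSS `T̲̂^(*)(A)`: marking label `0` means a body
(`bo`) transition, `n ≥ 1` a loop-entry transition of level `n`. -/
inductive MStep : SExp A → Option A × ℕ → SExp A → Prop
  | act {a : A} : MStep (SExp.up (StExp.act a)) (some a, 0) (SExp.up StExp.one)
  | addL {e₁ e₂ : StExp A} {a : A} {n : ℕ} {E' : SExp A} :
      MStep (SExp.up e₁) (some a, n) E' → MStep (SExp.up (StExp.add e₁ e₂)) (some a, 0) E'
  | addR {e₁ e₂ : StExp A} {a : A} {n : ℕ} {E' : SExp A} :
      MStep (SExp.up e₂) (some a, n) E' → MStep (SExp.up (StExp.add e₁ e₂)) (some a, 0) E'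
  | upMulL {e₁ e₂ : StExp A} {l : Option A × ℕ} {E₁' : SExp A} :
      MStep (SExp.up e₁) l E₁' → MStep (SExp.up (StExp.mul e₁ e₂)) l (SExp.pr E₁' e₂)
  | upMulR {e₁ e₂ : StExp A} {a : A} {n : ℕ} {E₂' : SExp A} :
      StExp.Term e₁ → MStep (SExp.up e₂) (some a, n) E₂' →
      MStep (SExp.up (StExp.mul e₁ e₂)) (some a, 0) E₂'
  | upStarP {e : StExp A} {a : A} {n : ℕ} {E' : SExp A} :
      NormedP (SExp.up e) → MStep (SExp.up e) (some a, n) E' →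
      MStep (SExp.up (StExp.star e)) (some a, e.height + 1) (SExp.st E' e)
  | upStarN {e : StExp A} {a : A} {n : ℕ} {E' : SExp A} :
      ¬ NormedP (SExp.up e) → MStep (SExp.up e) (some a, n) E' →
      MStep (SExp.up (StExp.star e)) (some a, 0) (SExp.st E' e)
  | prL {E₁ E₁' : SExp A} {e₂ : StExp A} {l : Option A × ℕ} :
      MStep E₁ l E₁' → MStep (SExp.pr E₁ e₂) l (SExp.pr E₁' e₂)
  | prR {E₁ E₂' : SExp A} {e₂ : StExp A} {a : A} {n : ℕ} :
      STerm E₁ → MStep (SExp.up e₂) (some a, n) E₂' →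
      MStep (SExp.pr E₁ e₂) (some a, 0) E₂'
  | stL {E₁ E₁' : SExp A} {e₂ : StExp A} {l : Option A × ℕ} :
      MStep E₁ l E₁' → MStep (SExp.st E₁ e₂) l (SExp.st E₁' e₂)
  | stOne {E₁ : SExp A} {e₂ : StExp A} :
      STerm E₁ → MStep (SExp.st E₁ e₂) (none, 0) (SExp.up (StExp.star e₂))

/-- Body transition `→bo`. -/
def BStep (E F : SExp A) : Prop := ∃ l : Option A, MStep E (l, 0) F

/-- Star height of stacked star expressions. -/
def heightS : SExp A → ℕ
  | .up e => e.height
  | .pr E e => max E.heightS e.height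
  | .st E e => max E.heightS (e.height + 1)

end SExp

/-- Applicative contexts of stacked star expressions. -/
inductive AppCtx (A : Type u) : Type u
  | hole : AppCtx A
  | pr : AppCtx A → StExp A → AppCtx A
  | st : AppCtx A → StExp A → AppCtx A

/-- Filling the hole of an applicative context. -/
def AppCtx.fill {A : Type u} : AppCtx A → SExp A → SExp A
  | .hole, E => E
  | .pr C e, E => SExp.pr (C.fill E) e
  | .st C e, E => SExp.st (C.fill E) e

/-- A labeled transition system with termination. -/
structure LTS (S : Type u) (L : Type v) where
  step : S → L → S → Prop
  term : S → Prop

/-- Bisimulation between two LTSs with termination. -/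
def IsBisimulation {S₁ : Type u} {S₂ : Type v} {L : Type w}
    (M₁ : LTS S₁ L) (M₂ : LTS S₂ L) (B : S₁ → S₂ → Prop) : Prop :=
  (∃ s₁ s₂, B s₁ s₂) ∧
  ∀ s₁ s₂, B s₁ s₂ →
    ((∀ a s₁', M₁.step s₁ a s₁' → ∃ s₂', M₂.step s₂ a s₂' ∧ B s₁' s₂') ∧
     (∀ a s₂', M₂.step s₂ a s₂' → ∃ s₁', M₁.step s₁ a s₁' ∧ B s₁' s₂') ∧
     (M₁.term s₁ ↔ M₂.term s₂))

/-- The star expressions LTS `L(StExp(A))`. -/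
def stexpLTS (A : Type u) : LTS (StExp A) A := ⟨StExp.Step, StExp.Term⟩

/-- The induced LTS of the stacked star expressions 1-LTS `L1(StExp^(*)(A))`. -/
def indSExpLTS (A : Type u) : LTS (SExp A) A := ⟨SExp.IStep, SExp.ITerm⟩

/-- A (rooted) chart. -/
structure Chart (V : Type u) (L : Type v) where
  verts : Set V
  start : V
  step : V → L → V → Prop
  term : V → Prop

/-- Bisimulation between two charts: a bisimulation between the underlying
LTSs that relates the start vertices. -/
def IsChartBisim {V₁ : Type u} {V₂ : Type v} {L : Type w}
    (C₁ : Chart V₁ L) (C₂ : Chart V₂ L) (B : V₁ → V₂ → Prop) : Prop :=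
  (∀ x y, B x y → x ∈ C₁.verts ∧ y ∈ C₂.verts) ∧
  B C₁.start C₂.start ∧
  ∀ x y, B x y →
    ((∀ a x', C₁.step x a x' → ∃ y', C₂.step y a y' ∧ B x' y') ∧
     (∀ a y', C₂.step y a y' → ∃ x', C₁.step x a x' ∧ B x' y') ∧
     (C₁.term x ↔ C₂.term y))

def ChartBisimilar {V₁ : Type u} {V₂ : Type v} {L : Type w}
    (C₁ : Chart V₁ L) (C₂ : Chart V₂ L) : Prop :=
  ∃ B, IsChartBisim C₁ C₂ B

/-- Star expressions reachable from `e` in Milner's LTS. -/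
def MReach {A : Type u} (e : StExp A) : Set (StExp A) :=
  {f | Relation.ReflTransGen (fun x y => ∃ a, StExp.Step x a y) e f}

/-- The chart interpretation `C(e)` of a star expression. -/
def chartInt {A : Type u} (e : StExp A) : Chart (StExp A) A where
  verts := MReach e
  start := e
  step x a y := x ∈ MReach e ∧ StExp.Step x a y
  term x := x ∈ MReach e ∧ StExp.Term x

/-- Stacked star expressions reachable from (the canonical representation of)
`e` in the 1-LTS. -/
def SReach {A : Type u} (e : StExp A) : Set (SExp A) :=
  {F | Relation.ReflTransGen SExp.AStep (SExp.flatUp e) F}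

/-- The 1-chart interpretation `C1(e)` of a star expression. -/
def oneChartInt {A : Type u} (e : StExp A) : Chart (SExp A) (Option A) where
  verts := SReach e
  start := SExp.flatUp e
  step x l y := x ∈ SReach e ∧ SExp.SStep x l y
  term x := x ∈ SReach e ∧ SExp.STerm x

/-- The entry/body-labeled 1-chart interpretation `Ĉ1(e)`. -/
def markedOneChartInt {A : Type u} (e : StExp A) : Chart (SExp A) (Option A × ℕ) where
  verts := SReach e
  start := SExp.flatUp e
  step x l y := x ∈ SReach e ∧ SExp.MStep x l y
  term x := x ∈ SReach e ∧ SExp.STerm x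

/-- The induced chart of a 1-chart: induced transitions and induced
termination. -/
def indChart {V : Type u} {A : Type v} (C : Chart V (Option A)) : Chart V A where
  verts := C.verts
  start := C.start
  step x a y := ∃ u, Relation.ReflTransGen (fun s t => C.step s none t) x u ∧ C.step u (some a) y
  term x := ∃ u, Relation.ReflTransGen (fun s t => C.step s none t) x u ∧ C.term u

/-- An infinite path from the start vertex of a chart. -/
def IsInfPathFrom {V : Type u} {L : Type v} (C : Chart V L) (p : ℕ → V) : Prop :=
  p 0 = C.start ∧ ∀ i, ∃ l, C.step (p i) l (p (i + 1))

/-- Loop chart: (L1) an infinite path from the start vertex exists, (L2) every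
infinite path from the start vertex returns to it after a positive number of
transitions, (L3) only the start vertex may terminate. -/
def IsLoopChart {V : Type u} {L : Type v} (C : Chart V L) : Prop :=
  (∃ p, IsInfPathFrom C p) ∧
  (∀ p, IsInfPathFrom C p → ∃ k, 0 < k ∧ p k = C.start) ∧
  (∀ w ∈ C.verts, C.term w → w = C.start)

namespace LLEE

variable {S : Type u} {L : Type v}

/-- Body transition of an entry/body-labeling. -/
def Body (step : S → L × ℕ → S → Prop) (x y : S) : Prop := ∃ l, step x (l, 0) y

/-- Entry transition of level `n` of an entry/body-labeling. -/
def Entry (step : S → L × ℕ → S → Prop) (n : ℕ) (x y : S) : Prop := ∃ l, step x (l, n) y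

/-- Vertices of the induced subchart at `(v, n)`: on paths that start with an
`→[n]` transition from `v`, continue with body transitions, and halt upon
revisiting `v`. -/
def loopVerts (step : S → L × ℕ → S → Prop) (v : S) (n : ℕ) : Set S :=
  insert v {w | ∃ u, Entry step n v u ∧
    Relation.ReflTransGen (fun x y => Body step x y ∧ x ≠ v) u w}

/-- The induced subchart at `(v, n)`. -/
def subchartAt (step : S → L × ℕ → S → Prop) (term : S → Prop) (v : S) (n : ℕ) :
    Chart S (L × ℕ) where
  verts := loopVerts step v n
  start := v
  step x l y :=
    (x = v ∧ l.2 = n ∧ step x l y) ∨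
    (x ∈ loopVerts step v n ∧ x ≠ v ∧ l.2 = 0 ∧ step x l y)
  term x := x ∈ loopVerts step v n ∧ term x

/-- LLEE-witness conditions (W1)–(W3) for an entry/body-labeled transition
system with transitions `step` and termination `term`. -/
def IsWitness (step : S → L × ℕ → S → Prop) (term : S → Prop) : Prop :=
  (¬ ∃ p : ℕ → S, ∀ i, Body step (p i) (p (i + 1))) ∧
  (∀ v n, 0 < n → (∃ w, Entry step n v w) → IsLoopChart (subchartAt step term v n)) ∧
  (∀ v n, 0 < n → (∃ w, Entry step n v w) →
    ∀ t, t ∈ loopVerts step v n → t ≠ v → ∀ m t', 0 < m → Entry step m t t' → m < n)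

end LLEE

namespace LEE

variable {V : Type u} {L : Type v}

/-- Vertices of the subchart generated from `v` by a set `U` of transitions
from `v`: paths start with a transition in `U` and continue (with arbitrary
transitions) until `v` is reached again. -/
def genVerts (C : Chart V L) (v : V) (U : Set (V × L × V)) : Set V :=
  insert v {w | ∃ u, (∃ l, (v, l, u) ∈ U) ∧
    Relation.ReflTransGen (fun x y => (∃ l, C.step x l y) ∧ x ≠ v) u w}

/-- The subchart generated from `v` by the transitions in `U`. -/
def genSubchart (C : Chart V L) (v : V) (U : Set (V × L × V)) : Chart V L where
  verts := genVerts C v U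
  start := v
  step x l y :=
    (x = v ∧ (v, l, y) ∈ U) ∨
    (x ∈ genVerts C v U ∧ x ≠ v ∧ C.step x l y)
  term x := x ∈ genVerts C v U ∧ C.term x

/-- `U` determines a loop subchart of `C` rooted at `v`. -/
def IsLoopSubchart (C : Chart V L) (v : V) (U : Set (V × L × V)) : Prop :=
  v ∈ C.verts ∧ U.Nonempty ∧
  (∀ t ∈ U, t.1 = v ∧ C.step t.1 t.2.1 t.2.2) ∧
  IsLoopChart (genSubchart C v U)

/-- Elimination of the loop-entry transitions in `U`, followed by removal of
all vertices and transitions that become unreachable. -/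
def elim (C : Chart V L) (U : Set (V × L × V)) : Chart V L :=
  let step' : V → L → V → Prop := fun x l y => C.step x l y ∧ (x, l, y) ∉ U
  let R : Set V := {w | Relation.ReflTransGen (fun x y => ∃ l, step' x l y) C.start w}
  { verts := C.verts ∩ R
    start := C.start
    step := fun x l y => step' x l y ∧ x ∈ R ∧ y ∈ R
    term := fun x => C.term x ∧ x ∈ R }

/-- One step of the loop elimination procedure. -/
def ElimStep (C C' : Chart V L) : Prop :=
  ∃ v U, IsLoopSubchart C v U ∧ C' = elim C U

/-- The chart has an infinite path. -/
def HasInfPath (C : Chart V L) : Prop :=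
  ∃ p : ℕ → V, p 0 ∈ C.verts ∧ ∀ i, ∃ l, C.step (p i) l (p (i + 1))

/-- The loop existence and elimination property LEE: repeated elimination of
loop subcharts results in a chart without an infinite path. -/
def SatisfiesLEE (C : Chart V L) : Prop :=
  ∃ C', Relation.ReflTransGen ElimStep C C' ∧ ¬ HasInfPath C'

end LEE

/-- A maximal path of body transitions from `X` in the entry/body-labeled
1-LTS: finite (of length `len`) or infinite (`len = ⊤`), and if finite then
not extensible by any further body transition. -/
structure BoPath (A : Type u) (X : SExp A) where
  len : ℕ∞
  f : ℕ → SExp A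
  head : f 0 = X
  steps : ∀ i : ℕ, (i : ℕ∞) < len → SExp.BStep (f i) (f (i + 1))
  maximal : ∀ n : ℕ, len = (n : ℕ∞) → ∀ Y, ¬ SExp.BStep (f n) Y

/-- Canonical stacked star expressions (the states of the stacked star
expressions 1-LTS `L1(StExp^(*)(A))`). -/
def CSExp (A : Type u) : Type u := {E : SExp A // SExp.Canonical E}

/-!
Normedness is a syntactic property: `0` is the only non-normed atom, a sum needs one
normed summand, a product both factors, and every star is normed. Transitions reflect
syntactic normedness and terminating expressions have it, so every normed `E` is
syntactically normed. Conversely a syntactically normed expression terminates via body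
transitions alone: stars are never unfolded (they terminate immediately), a stacked
`E * e*` is left by its `1`-transition to `e*`, and the rules for `+` and for the right
factor of a product always produce body labels.
-/

namespace StExp

variable {A : Type u}

def SynNormed : StExp A → Prop
  | .zero => False
  | .one => True
  | .act _ => True
  | .add e₁ e₂ => e₁.SynNormed ∨ e₂.SynNormed
  | .mul e₁ e₂ => e₁.SynNormed ∧ e₂.SynNormed
  | .star _ => True

theorem Term.synNormed {e : StExp A} (h : e.Term) : e.SynNormed := by
  induction h <;> simp [SynNormed, *]

end StExp

namespace SExp

variable {A : Type u}

def SynNormed : SExp A → Prop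
  | .up e => e.SynNormed
  | .pr E e => E.SynNormed ∧ e.SynNormed
  | .st E _ => E.SynNormed

theorem STerm.synNormed {E : SExp A} (h : E.STerm) : E.SynNormed := by
  induction h with
  | up h => exact h.synNormed
  | pr _ h ih => exact ⟨ih, h.synNormed⟩

theorem STerm.isStExp {E : SExp A} (h : E.STerm) : E.IsStExp := by
  induction h with
  | up _ => trivial
  | pr _ _ ih => exact ih

theorem SStep.synNormed {E E' : SExp A} {l : Option A} (h : SStep E l E')
    (h' : E'.SynNormed) : E.SynNormed := by
  induction h with
  | act | upStar _ _ => trivial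
  | addL _ ih => exact Or.inl (ih h')
  | addR _ ih => exact Or.inr (ih h')
  | upMulL _ ih | prL _ ih => exact ⟨ih h'.1, h'.2⟩
  | upMulR ht _ ih => exact ⟨ht.synNormed, ih h'⟩
  | prR ht _ ih => exact ⟨ht.synNormed, ih h'⟩
  | stL _ ih => exact ih h'
  | stOne ht => exact ht.synNormed

theorem Normed.synNormed {E : SExp A} (h : E.Normed) : E.SynNormed := by
  obtain ⟨F, hpath, hF⟩ := h
  induction hpath using Relation.ReflTransGen.head_induction_on with
  | refl => exact hF.synNormed
  | head hstep _ ih => exact hstep.choose_spec.synNormed ih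

theorem MStep.exists_some_of_up {e : StExp A} {l : Option A} {n : ℕ} {E' : SExp A}
    (h : MStep (up e) (l, n) E') : ∃ a, l = some a := by
  generalize hE : up e = E at h
  generalize hp : (l, n) = p at h
  induction h generalizing e with
  | upMulL _ ih => exact ih rfl hp
  | prL | prR | stL | stOne => cases hE
  | _ => exact ⟨_, (Prod.ext_iff.mp hp).1⟩

theorem reflTransGen_bStep_pr {E F : SExp A} (e : StExp A)
    (h : Relation.ReflTransGen BStep E F) :
    Relation.ReflTransGen BStep (pr E e) (pr F e) :=
  h.lift (pr · e) fun _ _ ⟨l, hs⟩ => ⟨l, .prL hs⟩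

theorem reflTransGen_bStep_st {E F : SExp A} (e : StExp A)
    (h : Relation.ReflTransGen BStep E F) :
    Relation.ReflTransGen BStep (st E e) (st F e) :=
  h.lift (st · e) fun _ _ ⟨l, hs⟩ => ⟨l, .stL hs⟩

def BodyNormed (E : SExp A) : Prop :=
  ∃ F, Relation.ReflTransGen BStep E F ∧ F.STerm

theorem STerm.bodyNormed {E : SExp A} (h : E.STerm) : E.BodyNormed :=
  ⟨E, .refl, h⟩

theorem BodyNormed.up_cases {e : StExp A} (h : (up e).BodyNormed) :
    e.Term ∨ ∃ a E', MStep (up e) (some a, 0) E' ∧ E'.BodyNormed := by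
  obtain ⟨F, hpath, hF⟩ := h
  rcases hpath.cases_head with rfl | ⟨E', ⟨l, hs⟩, hrest⟩
  · cases hF with | up ht => exact .inl ht
  · obtain ⟨a, rfl⟩ := hs.exists_some_of_up
    exact .inr ⟨a, E', hs, F, hrest, hF⟩

theorem BodyNormed.head {E E' : SExp A} {l : Option A} (hs : MStep E (l, 0) E')
    (h : E'.BodyNormed) : E.BodyNormed :=
  let ⟨F, hpath, hF⟩ := h
  ⟨F, .head ⟨l, hs⟩ hpath, hF⟩

theorem BodyNormed.add_left {e₁ : StExp A} (e₂ : StExp A) (h : (up e₁).BodyNormed) :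
    (up (e₁.add e₂)).BodyNormed := by
  rcases h.up_cases with ht | ⟨a, E', hs, h'⟩
  · exact (STerm.up (.addL ht)).bodyNormed
  · exact h'.head (.addL hs)

theorem BodyNormed.add_right (e₁ : StExp A) {e₂ : StExp A} (h : (up e₂).BodyNormed) :
    (up (e₁.add e₂)).BodyNormed := by
  rcases h.up_cases with ht | ⟨a, E', hs, h'⟩
  · exact (STerm.up (.addR ht)).bodyNormed
  · exact h'.head (.addR hs)

theorem BodyNormed.pr {E : SExp A} {e : StExp A} (hE : E.BodyNormed)
    (he : (up e).BodyNormed) : (pr E e).BodyNormed := by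
  obtain ⟨F, hpath, hF⟩ := hE
  suffices (SExp.pr F e).BodyNormed by
    obtain ⟨G, hpath', hG⟩ := this
    exact ⟨G, (reflTransGen_bStep_pr e hpath).trans hpath', hG⟩
  rcases he.up_cases with ht | ⟨a, E', hs, h'⟩
  · exact (STerm.pr hF ht).bodyNormed
  · exact h'.head (.prR hF hs)

theorem BodyNormed.upMul {e₁ e₂ : StExp A} (h₁ : (up e₁).BodyNormed)
    (h₂ : (up e₂).BodyNormed) : (up (e₁.mul e₂)).BodyNormed := by
  rcases h₁.up_cases with ht₁ | ⟨a, E', hs, h'⟩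
  · rcases h₂.up_cases with ht₂ | ⟨b, E'', hs', h''⟩
    · exact (STerm.up (.mul ht₁ ht₂)).bodyNormed
    · exact h''.head (.upMulR ht₁ hs')
  · exact (h'.pr h₂).head (.upMulL hs)

theorem BodyNormed.st {E : SExp A} (e : StExp A) (h : E.BodyNormed) :
    (st E e).BodyNormed := by
  obtain ⟨F, hpath, hF⟩ := h
  exact ⟨up e.star, (reflTransGen_bStep_st e hpath).tail ⟨none, .stOne hF⟩, .up .star⟩

theorem _root_.StExp.SynNormed.bodyNormed_up {e : StExp A} (h : e.SynNormed) :
    (up e).BodyNormed := by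
  induction e with
  | zero => exact h.elim
  | one => exact (STerm.up .one).bodyNormed
  | act a => exact (STerm.up .one).bodyNormed.head .act
  | add e₁ e₂ ih₁ ih₂ =>
    exact h.elim (fun h₁ => (ih₁ h₁).add_left e₂) (fun h₂ => (ih₂ h₂).add_right e₁)
  | mul e₁ e₂ ih₁ ih₂ => exact (ih₁ h.1).upMul (ih₂ h.2)
  | star e => exact (STerm.up .star).bodyNormed

theorem SynNormed.bodyNormed {E : SExp A} (h : E.SynNormed) : E.BodyNormed := by
  induction E with
  | up e => exact h.bodyNormed_up
  | pr E e ih => exact (ih h.1).pr h.2.bodyNormed_up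
  | st E e ih => exact (ih h).st e

end SExp

/-- Every normed stacked star expression reaches, by a (possibly
empty) sequence of body transitions, a star expression that terminates. -/
theorem normed_body_path_to_termination {A : Type u} (E : SExp A)
    (h : SExp.Normed E) :
    ∃ F : SExp A, Relation.ReflTransGen SExp.BStep E F ∧
      SExp.IsStExp F ∧ SExp.STerm F := by
  obtain ⟨F, hpath, hF⟩ := h.synNormed.bodyNormed
  exact ⟨F, hpath, hF.isStExp, hF⟩
end

section
/- If E →[n] E' is a loop-entry transition with level n > 0 in L̂1(StExp^(*)(A)), then there exist a star expression e, an applicative context C, a stacked star expression E0', an action a and a marking label l such that E = C[e*], e is normed⁺, e →(a,l) E0', E' = C[E0' * e*], and n = h(e) + 1. -/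
universe u v w

/-! Only the star rule creates a positive marking label; the other rules either produce body
labels or pass the label of their premise on through `·` or `*` on the left, that is, through an
applicative context. The left-product rule on an unstacked `e₁ · e₂` would do so too, but its
source is not canonical. -/

namespace SExp

variable {A : Type u}

def IsCtxStarEntry (E E' : SExp A) (n : ℕ) : Prop :=
  ∃ (e : StExp A) (C : AppCtx A) (E₀ : SExp A) (a : A) (l : ℕ),
    E = C.fill (up (StExp.star e)) ∧ NormedP (up e) ∧ MStep (up e) (some a, l) E₀ ∧
    E' = C.fill (st E₀ e) ∧ n = e.height + 1

theorem IsCtxStarEntry.pr {E E' : SExp A} {n : ℕ} (h : IsCtxStarEntry E E' n) (e₂ : StExp A) :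
    IsCtxStarEntry (pr E e₂) (pr E' e₂) n := by
  obtain ⟨e, C, E₀, a, l, rfl, hnormed, hstep, rfl, rfl⟩ := h
  exact ⟨e, C.pr e₂, E₀, a, l, rfl, hnormed, hstep, rfl, rfl⟩

theorem IsCtxStarEntry.st {E E' : SExp A} {n : ℕ} (h : IsCtxStarEntry E E' n) (e₂ : StExp A) :
    IsCtxStarEntry (st E e₂) (st E' e₂) n := by
  obtain ⟨e, C, E₀, a, l, rfl, hnormed, hstep, rfl, rfl⟩ := h
  exact ⟨e, C.st e₂, E₀, a, l, rfl, hnormed, hstep, rfl, rfl⟩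

theorem MStep.isCtxStarEntry {E E' : SExp A} {l : Option A × ℕ} (h : MStep E l E')
    (hl : 0 < l.2) (hE : Canonical E) : IsCtxStarEntry E E' l.2 := by
  induction h with
  | upStarP hnormed hstep => exact ⟨_, .hole, _, _, _, rfl, hnormed, hstep, rfl, rfl⟩
  | upMulL => exact hE.elim
  | prL _ ih => exact (ih hl hE).pr _
  | stL _ ih => exact (ih hl hE).st _
  | _ => simp at hl

end SExp

/-- Every loop-entry transition `E →[n] E'` (level `n > 0`)
decomposes as `E = C[e*]`, `e` normed⁺, `e →(a,l) E₀'`, `E' = C[E₀' * e*]`,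
and `n = h(e) + 1`. -/
theorem loop_entry_transition_decomposition {A : Type u}
    (E E' : SExp A) (ab : Option A) (n : ℕ) (hn : 0 < n)
    (hE : SExp.Canonical E)
    (h : SExp.MStep E (ab, n) E') :
    ∃ (e : StExp A) (C : AppCtx A) (E₀ : SExp A) (a : A) (l : ℕ),
      E = C.fill (SExp.up (StExp.star e)) ∧
      SExp.NormedP (SExp.up e) ∧
      SExp.MStep (SExp.up e) (some a, l) E₀ ∧
      E' = C.fill (SExp.st E₀ e) ∧
      n = e.height + 1 :=
  h.isCtxStarEntry hn hE
end

section
/- Neither body transitions nor loop-entry transitions in L̂1(StExp^(*)(A)) increase star height: if E →bo E' or E →[n] E' (for any n ≥ 1) holds in L̂1(StExp^(*)(A)), then h(E') ≤ h(E). -/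
universe u v w

namespace SExp

theorem MStep.heightS_le {A : Type u} {E E' : SExp A} {l : Option A × ℕ}
    (h : MStep E l E') : E'.heightS ≤ E.heightS := by
  induction h <;> simp only [heightS, StExp.height] at * <;> omega

end SExp

/-- Neither body transitions nor loop-entry transitions increase
star height. -/
theorem marked_steps_do_not_increase_star_height {A : Type u}
    (E E' : SExp A) (a : Option A) :
    (SExp.MStep E (a, 0) E' → SExp.heightS E' ≤ SExp.heightS E) ∧
    (∀ n : ℕ, 1 ≤ n → SExp.MStep E (a, n) E' → SExp.heightS E' ≤ SExp.heightS E) :=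
  ⟨fun h => h.heightS_le, fun _ _ h => h.heightS_le⟩
end
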